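/- Let x ∈ ℝ^n, let T₀ be a set of s indices containing the s largest-magnitude entries of x, and let T̃ ⊆ {1,…,n} be an arbitrary set with |T̃| = ρs and |T̃ ∩ T₀| = αρs. Fix w ∈ [0,1] and set b = w + (1−w)√(1 + ρ − 2αρ). Suppose a > 1 with as a positive integer, (1−α)ρ ≤ a, A ∈ ℝ^{m×n} satisfies the restricted isometry bound with constant δ_{as} at level as and with constant δ_{(a+1)s} at level (a+1)s, and δ_{as} + (a/b²)·δ_{(a+1)s} < a/b² − 1. Let y = Ax + z with ‖z‖₂ ≤ ε, and let x̂ satisfy ‖Ax̂ − y‖₂ ≤ ε and w‖x̂_{T̃}‖₁ + ‖x̂_{T̃ᶜ}‖₁ ≤ w‖x_{T̃}‖₁ + ‖x_{T̃ᶜ}‖₁. Then ‖x̂ − x‖₂ ≤ C₀ε + C₁s^{−1/2}( w‖x_{T₀ᶜ}‖₁ + (1−w)‖x_{T̃ᶜ∩T₀ᶜ}‖₁ ), where C₀ = 2(1 + b/√a)/(√(1−δ_{(a+1)s}) − (b/√a)√(1+δ_{as})) and C₁ = 2a^{−1/2}(√(1−δ_{(a+1)s}) + √(1+δ_{as}))/(√(1−δ_{(a+1)s})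 − (b/√a)√(1+δ_{as})). -/

import Mathlib

open Finset

/-- The restriction of a vector to a set of indices: agrees with `x` on `S`, zero elsewhere. -/
noncomputable def restr {n : ℕ} (x : Fin n → ℝ) (S : Finset (Fin n)) : Fin n → ℝ :=
  fun i => if i ∈ S then x i else 0

/-- The ℓ1 norm of a vector in ℝ^n. -/
noncomputable def nrm1 {n : ℕ} (x : Fin n → ℝ) : ℝ := ∑ i, |x i|

/-- The ℓ2 (Euclidean) norm of a vector in ℝ^n. -/
noncomputable def nrm2 {n : ℕ} (x : Fin n → ℝ) : ℝ := Real.sqrt (∑ i, (x i) ^ 2)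

/-- The weighted ℓ1 norm associated with support-estimate sets `T 1, …, T N`
(with weights `w 1, …, w N`), where weight `1` is used off `⋃ i, T i`. -/
noncomputable def wl1 {n : ℕ} (N : ℕ) (T : ℕ → Finset (Fin n)) (w : ℕ → ℝ)
    (x : Fin n → ℝ) : ℝ :=
  ∑ i ∈ Finset.Icc 1 N, w i * nrm1 (restr x (T i)) +
    nrm1 (restr x ((Finset.Icc 1 N).biUnion T)ᶜ)

/-- `A` satisfies the restricted isometry bound with constant `δ` at sparsity level `k`. -/
def RIPBound {m n : ℕ} (A : Matrix (Fin m) (Fin n) ℝ) (δ : ℝ) (k : ℕ) : Prop :=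
  ∀ v : Fin n → ℝ, (Finset.univ.filter fun i => v i ≠ 0).card ≤ k →
    (1 - δ) * (nrm2 v) ^ 2 ≤ (nrm2 (A.mulVec v)) ^ 2 ∧
      (nrm2 (A.mulVec v)) ^ 2 ≤ (1 + δ) * (nrm2 v) ^ 2

/-- The constant `K_N` appearing in the multi-weight recovery guarantee. -/
noncomputable def KN (N : ℕ) (w ρ α : ℕ → ℝ) : ℝ :=
  w N + (1 - w 1) * Real.sqrt (1 + ∑ i ∈ Finset.Icc 1 N, (ρ i - 2 * α i * ρ i)) +
    ∑ j ∈ Finset.Icc 2 N, (w (j - 1) - w j) *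
      Real.sqrt (1 + ∑ i ∈ Finset.Icc j N, (ρ i - 2 * α i * ρ i))

/-- The quantity `D` appearing in the multi-weight error bounds. -/
noncomputable def DD {n : ℕ} (N : ℕ) (T : ℕ → Finset (Fin n)) (T₀ : Finset (Fin n))
    (w : ℕ → ℝ) (x : Fin n → ℝ) : ℝ :=
  (∑ i ∈ Finset.Icc 1 N, w i) * nrm1 (restr x T₀ᶜ) +
    (1 - ∑ i ∈ Finset.Icc 1 N, w i) *
      nrm1 (restr x (((Finset.Icc 1 N).biUnion T)ᶜ ∩ T₀ᶜ)) -
    ∑ i ∈ Finset.Icc 1 N, (∑ j ∈ (Finset.Icc 1 N).erase i, w j) *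
      nrm1 (restr x (T i ∩ T₀ᶜ))

/-- The set `S_j = (T₀ ∪ ⋃_{i=j}^N T̃ᵢ) \ ⋃_{i=j}^N (T̃ᵢ ∩ T₀)`. -/
def SS {n : ℕ} (N : ℕ) (T : ℕ → Finset (Fin n)) (T₀ : Finset (Fin n)) (j : ℕ) :
    Finset (Fin n) :=
  (T₀ ∪ (Finset.Icc j N).biUnion T) \ (Finset.Icc j N).biUnion (fun i => T i ∩ T₀)

/-!
Write `h = x̂ - x` and `ξ = w ‖x_{T₀ᶜ}‖₁ + (1 - w) ‖x_{T̃ᶜ ∩ T₀ᶜ}‖₁`. Minimality of `x̂` for the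
weighted `ℓ1` norm confines `h` to the cone
`‖h_{T₀ᶜ}‖₁ ≤ w ‖h_{T₀}‖₁ + (1 - w) ‖h_{T₀ ∆ T̃}‖₁ + 2 ξ`, and since `|T₀ ∆ T̃| = (1 + ρ - 2αρ) s`,
Cauchy–Schwarz bounds the right side by `b √s ‖h_{T₀ ∪ T̃}‖₂ + 2 ξ`. Cutting `T₀ᶜ` into blocks of
the `as` largest remaining entries of `h`, each block has `ℓ2` norm at most the `ℓ1` norm of the
previous block over `√(as)`; so the restricted isometry bounds at levels `as` and `(a + 1) s`,
together with `‖A h‖₂ ≤ 2ε`, control `h` on `T₀` plus the first block, and hence `‖h‖₂`. Since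
`|T̃ \ T₀| ≤ as`, that first block carries at least the `ℓ2` mass of `h` on `T̃ \ T₀`, which closes
the loop, and the condition on the isometry constants makes the resulting denominator positive.
-/

open scoped symmDiff Matrix

section Norms

variable {n : ℕ}

lemma nrm2_nonneg (v : Fin n → ℝ) : 0 ≤ nrm2 v := Real.sqrt_nonneg _

lemma nrm2_eq_norm (v : Fin n → ℝ) : nrm2 v = ‖WithLp.toLp 2 v‖ := by
  simp [nrm2, EuclideanSpace.norm_eq]

lemma nrm2_add_le (u v : Fin n → ℝ) : nrm2 (u + v) ≤ nrm2 u + nrm2 v := by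
  simpa only [nrm2_eq_norm, WithLp.toLp_add] using norm_add_le (WithLp.toLp 2 u) (WithLp.toLp 2 v)

lemma nrm2_sub_le (u v : Fin n → ℝ) : nrm2 (u - v) ≤ nrm2 u + nrm2 v := by
  simpa only [nrm2_eq_norm, WithLp.toLp_sub] using norm_sub_le (WithLp.toLp 2 u) (WithLp.toLp 2 v)

lemma restr_union {S T : Finset (Fin n)} (hST : Disjoint S T) (v : Fin n → ℝ) :
    restr v (S ∪ T) = restr v S + restr v T := by
  ext i
  by_cases hS : i ∈ S
  · simp [restr, hS, disjoint_left.1 hST hS]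
  · simp [restr, hS]

lemma restr_add_restr_compl (v : Fin n → ℝ) (S : Finset (Fin n)) :
    restr v S + restr v Sᶜ = v := by
  ext i
  by_cases hS : i ∈ S <;> simp [restr, hS]

lemma nrm1_restr_eq_sum_ite (v : Fin n → ℝ) (S : Finset (Fin n)) :
    nrm1 (restr v S) = ∑ i, if i ∈ S then |v i| else 0 := by
  simp only [nrm1, restr, apply_ite, abs_zero]

lemma nrm1_restr (v : Fin n → ℝ) (S : Finset (Fin n)) :
    nrm1 (restr v S) = ∑ i ∈ S, |v i| := by
  rw [nrm1_restr_eq_sum_ite, sum_ite_mem, univ_inter]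

lemma nrm2_restr (v : Fin n → ℝ) (S : Finset (Fin n)) :
    nrm2 (restr v S) = √(∑ i ∈ S, v i ^ 2) := by
  simp only [nrm2, restr, ite_pow, zero_pow two_ne_zero, sum_ite_mem, univ_inter]

lemma nrm2_restr_mono (v : Fin n → ℝ) {S T : Finset (Fin n)} (hST : S ⊆ T) :
    nrm2 (restr v S) ≤ nrm2 (restr v T) := by
  rw [nrm2_restr, nrm2_restr]
  exact Real.sqrt_le_sqrt (sum_le_sum_of_subset_of_nonneg hST fun i _ _ => sq_nonneg _)

lemma nrm1_restr_le_sqrt_card_mul_nrm2 (v : Fin n → ℝ) (S : Finset (Fin n)) :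
    nrm1 (restr v S) ≤ √(#S : ℝ) * nrm2 (restr v S) := by
  have hcs : (∑ i ∈ S, |v i|) ^ 2 ≤ #S * ∑ i ∈ S, v i ^ 2 := by
    simpa only [sq_abs] using sq_sum_le_card_mul_sum_sq (s := S) (f := fun i => |v i|)
  rw [nrm1_restr, nrm2_restr, ← Real.sqrt_mul (Nat.cast_nonneg _)]
  exact Real.le_sqrt_of_sq_le hcs

lemma card_support_restr_le (v : Fin n → ℝ) (S : Finset (Fin n)) :
    #{i | restr v S i ≠ 0} ≤ #S :=
  card_le_card fun i hi => by
    by_contra hiS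
    simp [restr, hiS] at hi

end Norms

section RIP

variable {m n k : ℕ} {A : Matrix (Fin m) (Fin n) ℝ} {δ : ℝ}

lemma RIPBound.nrm2_mulVec_le (hA : RIPBound A δ k) {v : Fin n → ℝ}
    (hv : #{i | v i ≠ 0} ≤ k) : nrm2 (A *ᵥ v) ≤ √(1 + δ) * nrm2 v := by
  rw [← Real.sqrt_sq (nrm2_nonneg (A *ᵥ v)), ← Real.sqrt_sq (nrm2_nonneg v),
    ← Real.sqrt_mul' _ (sq_nonneg _)]
  exact Real.sqrt_le_sqrt (hA v hv).2

lemma RIPBound.sqrt_mul_nrm2_le (hA : RIPBound A δ k) {v : Fin n → ℝ}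
    (hv : #{i | v i ≠ 0} ≤ k) : √(1 - δ) * nrm2 v ≤ nrm2 (A *ᵥ v) := by
  rw [← Real.sqrt_sq (nrm2_nonneg (A *ᵥ v)), ← Real.sqrt_sq (nrm2_nonneg v),
    ← Real.sqrt_mul' _ (sq_nonneg _)]
  exact Real.sqrt_le_sqrt (hA v hv).1

end RIP

section Finsets

variable {ι : Type*} [DecidableEq ι]

lemma Finset.card_sdiff_cast (S T : Finset ι) : (#(S \ T) : ℝ) = #S - #(S ∩ T) := by
  rw [eq_sub_iff_add_eq]
  exact_mod_cast card_sdiff_add_card_inter S T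

lemma Finset.card_symmDiff_cast (S T : Finset ι) :
    (#(S ∆ T) : ℝ) = #S + #T - 2 * #(S ∩ T) := by
  rw [Finset.symmDiff_def, card_union_of_disjoint disjoint_sdiff_sdiff, Nat.cast_add,
    card_sdiff_cast, card_sdiff_cast, inter_comm T S]
  ring

lemma Finset.exists_subset_card_eq_forall_le (f : ι → ℝ) {U : Finset ι} {k : ℕ}
    (hk : k ≤ #U) : ∃ T ⊆ U, #T = k ∧ ∀ i ∈ U \ T, ∀ j ∈ T, f i ≤ f j := by
  induction k with
  | zero => exact ⟨∅, empty_subset U, rfl, by simp⟩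
  | succ k ih =>
    obtain ⟨T, hTU, hTk, hT⟩ := ih (Nat.le_of_succ_le hk)
    have hne : (U \ T).Nonempty := by
      rw [← card_pos, card_sdiff_of_subset hTU]
      omega
    obtain ⟨j₀, hj₀, hj₀max⟩ := exists_max_image (U \ T) f hne
    rw [mem_sdiff] at hj₀
    refine ⟨insert j₀ T, insert_subset hj₀.1 hTU, by rw [card_insert_of_notMem hj₀.2, hTk], ?_⟩
    intro i hi j hj
    have hi' : i ∈ U \ T := by
      simp only [mem_sdiff, mem_insert, not_or] at hi ⊢
      exact ⟨hi.1, hi.2.2⟩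
    rcases mem_insert.1 hj with rfl | hj
    · exact hj₀max i hi'
    · exact hT i hi' j hj

lemma Finset.sum_le_sum_of_forall_le_of_card_le {f : ι → ℝ} (hf : ∀ i, 0 ≤ f i)
    {U T W : Finset ι}
    (hT : ∀ i ∈ U \ T, ∀ j ∈ T, f i ≤ f j) (hWU : W ⊆ U) (hWT : #W ≤ #T) :
    ∑ i ∈ W, f i ≤ ∑ i ∈ T, f i := by
  rcases (W \ T).eq_empty_or_nonempty with hWT' | hne
  · exact sum_le_sum_of_subset_of_nonneg (sdiff_eq_empty_iff_subset.1 hWT') fun i _ _ => hf i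
  obtain ⟨i₀, hi₀, hmax⟩ := exists_max_image (W \ T) f hne
  have hcard : #(W \ T) ≤ #(T \ W) := by
    have := card_sdiff_add_card_inter W T
    have := card_sdiff_add_card_inter T W
    rw [inter_comm T W] at this
    omega
  have hi₀U : i₀ ∈ U \ T := by
    rw [mem_sdiff] at hi₀ ⊢
    exact ⟨hWU hi₀.1, hi₀.2⟩
  calc ∑ i ∈ W, f i = ∑ i ∈ W ∩ T, f i + ∑ i ∈ W \ T, f i :=
        (sum_inter_add_sum_sdiff W T f).symm
    _ ≤ ∑ i ∈ W ∩ T, f i + #(T \ W) • f i₀ := by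
        gcongr
        exact (sum_le_card_nsmul _ _ _ hmax).trans (nsmul_le_nsmul_left (hf i₀) hcard)
    _ ≤ ∑ i ∈ T ∩ W, f i + ∑ i ∈ T \ W, f i := by
        rw [inter_comm]
        gcongr
        exact card_nsmul_le_sum _ _ _ fun j hj => hT i₀ hi₀U j (mem_sdiff.1 hj).1
    _ = ∑ i ∈ T, f i := sum_inter_add_sum_sdiff T W f

end Finsets

section Tail

variable {n k : ℕ} (h : Fin n → ℝ)

lemma sqrt_mul_nrm2_restr_le_nrm1_restr (hk : 0 < k) {S T : Finset (Fin n)} (hTk : #T = k)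
    (hSk : #S ≤ k) (hST : ∀ i ∈ S, ∀ j ∈ T, |h i| ≤ |h j|) :
    √(k : ℝ) * nrm2 (restr h S) ≤ nrm1 (restr h T) := by
  rw [nrm1_restr]
  set M := ∑ j ∈ T, |h j|
  have hk' : (0 : ℝ) < k := by exact_mod_cast hk
  have hM : 0 ≤ M := by positivity
  have habs : ∀ i ∈ S, |h i| ≤ M / k := fun i hi => by
    rw [le_div_iff₀ hk']
    calc |h i| * k = ∑ _j ∈ T, |h i| := by rw [sum_const, hTk, nsmul_eq_mul, mul_comm]
      _ ≤ ∑ j ∈ T, |h j| := sum_le_sum (hST i hi)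
  have hsq : k * ∑ i ∈ S, h i ^ 2 ≤ M ^ 2 :=
    calc k * ∑ i ∈ S, h i ^ 2 ≤ k * (#S * (M / k) ^ 2) := by
          rw [← nsmul_eq_mul (#S)]
          gcongr
          refine sum_le_card_nsmul _ _ _ fun i hi => ?_
          rw [← sq_abs]
          gcongr
          exact habs i hi
      _ ≤ k * (k * (M / k) ^ 2) := by gcongr
      _ = M ^ 2 := by field_simp
  rw [nrm2_restr, ← Real.sqrt_mul hk'.le, ← Real.sqrt_sq hM]
  exact Real.sqrt_le_sqrt hsq

variable {h} {c : ℝ} {N : (Fin n → ℝ) → ℝ}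

/-- Shelling: `U \ T` splits into consecutive blocks of the `k` largest remaining entries, and each
block is bounded in `ℓ2` by the `ℓ1` norm of the previous one over `√k`. -/
lemma sqrt_mul_le_nrm1_restr_of_forall_le (hk : 0 < k) (hc : 0 ≤ c)
    (hN_add : ∀ u v, N (u + v) ≤ N u + N v)
    (hN : ∀ S : Finset (Fin n), #S ≤ k → N (restr h S) ≤ c * nrm2 (restr h S))
    (U T : Finset (Fin n)) (hTU : T ⊆ U) (hTk : #T = min k #U)
    (hT : ∀ i ∈ U \ T, ∀ j ∈ T, |h i| ≤ |h j|) :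
    √(k : ℝ) * N (restr h (U \ T)) ≤ c * nrm1 (restr h U) := by
  induction U using Finset.strongInduction generalizing T with
  | _ U ih =>
  have hU : 0 ≤ nrm1 (restr h U) := by rw [nrm1_restr]; positivity
  by_cases hUk : #U ≤ k
  · obtain rfl : T = U := eq_of_subset_of_card_le hTU (by omega)
    have h0 : N (restr h (T \ T)) ≤ 0 := by
      simpa [nrm2_restr] using hN ∅ (by simp)
    exact (mul_nonpos_of_nonneg_of_nonpos (Real.sqrt_nonneg _) h0).trans (mul_nonneg hc hU)
  have hTk' : #T = k := by omega
  obtain ⟨T₂, hT₂, hT₂k, hT₂top⟩ :=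
    exists_subset_card_eq_forall_le (fun i => |h i|) (min_le_right k #(U \ T))
  have hsub : U \ T ⊂ U := sdiff_ssubset hTU (by rw [← card_pos]; omega)
  have htail := ih (U \ T) hsub T₂ hT₂ hT₂k hT₂top
  have hblock : √(k : ℝ) * nrm2 (restr h T₂) ≤ nrm1 (restr h T) :=
    sqrt_mul_nrm2_restr_le_nrm1_restr h hk hTk' (by omega) fun i hi => hT i (hT₂ hi)
  have hsplit : restr h (U \ T) = restr h T₂ + restr h ((U \ T) \ T₂) := by
    rw [← restr_union disjoint_sdiff, union_sdiff_of_subset hT₂]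
  have hU_eq : nrm1 (restr h U) = nrm1 (restr h T) + nrm1 (restr h (U \ T)) := by
    simp only [nrm1_restr, ← sum_sdiff hTU, add_comm]
  calc √(k : ℝ) * N (restr h (U \ T))
      ≤ √(k : ℝ) * (c * nrm2 (restr h T₂)) + √(k : ℝ) * N (restr h ((U \ T) \ T₂)) := by
        rw [← mul_add, hsplit]
        gcongr
        exact (hN_add _ _).trans (add_le_add_left (hN T₂ (by omega)) _)
    _ ≤ c * nrm1 (restr h T) + c * nrm1 (restr h (U \ T)) := by
        rw [mul_left_comm]
        gcongr
    _ = c * nrm1 (restr h U) := by rw [hU_eq, mul_add]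

end Tail

section Cone

variable {n : ℕ}

lemma weighted_nrm1_eq_sum (w : ℝ) (v : Fin n → ℝ) (T : Finset (Fin n)) :
    w * nrm1 (restr v T) + nrm1 (restr v Tᶜ) = ∑ i, (if i ∈ T then w else 1) * |v i| := by
  simp only [nrm1_restr_eq_sum_ite, mul_sum, ← sum_add_distrib]
  refine sum_congr rfl fun i _ => ?_
  by_cases hi : i ∈ T <;> simp [hi]

/-- The cone constraint. It holds summand by summand: in each of the four cases (`i ∈ T₀` or not,
`i ∈ Tt` or not) it is a triangle inequality. -/
lemma nrm1_restr_compl_le_of_weighted_le {x xh : Fin n → ℝ} {T₀ Tt : Finset (Fin n)} {w : ℝ}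
    (hw0 : 0 ≤ w)
    (hmin : w * nrm1 (restr xh Tt) + nrm1 (restr xh Ttᶜ) ≤
      w * nrm1 (restr x Tt) + nrm1 (restr x Ttᶜ)) :
    nrm1 (restr (xh - x) T₀ᶜ) ≤
      w * nrm1 (restr (xh - x) T₀) + (1 - w) * nrm1 (restr (xh - x) (T₀ ∆ Tt)) +
        2 * (w * nrm1 (restr x T₀ᶜ) + (1 - w) * nrm1 (restr x (Ttᶜ ∩ T₀ᶜ))) := by
  rw [weighted_nrm1_eq_sum, weighted_nrm1_eq_sum] at hmin
  have hpt : ∀ i, (if i ∈ T₀ᶜ then |(xh - x) i| else 0) + (if i ∈ Tt then w else 1) * |x i| ≤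
      w * (if i ∈ T₀ then |(xh - x) i| else 0) +
        (1 - w) * (if i ∈ T₀ ∆ Tt then |(xh - x) i| else 0) +
        2 * (w * (if i ∈ T₀ᶜ then |x i| else 0) + (1 - w) * (if i ∈ Ttᶜ ∩ T₀ᶜ then |x i| else 0)) +
        (if i ∈ Tt then w else 1) * |xh i| := fun i => by
    have h₁ : |xh i - x i| ≤ |xh i| + |x i| := abs_sub _ _
    have h₂ : |x i| ≤ |xh i - x i| + |xh i| := by
      simpa [abs_sub_comm] using abs_sub_abs_le_abs_sub (x i) (xh i)
    by_cases hi₀ : i ∈ T₀ <;> by_cases hit : i ∈ Tt <;>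
      simp [hi₀, hit, mem_symmDiff] <;>
      linarith [mul_le_mul_of_nonneg_left h₁ hw0, mul_le_mul_of_nonneg_left h₂ hw0]
  have hsum := sum_le_sum fun i (_ : i ∈ univ) => hpt i
  simp only [sum_add_distrib, ← mul_sum, ← nrm1_restr_eq_sum_ite] at hsum
  linarith

lemma nrm1_restr_compl_le_of_cone {h : Fin n → ℝ} {T₀ Tt : Finset (Fin n)} {w r ξ : ℝ}
    (hw0 : 0 ≤ w) (hw1 : w ≤ 1) (hr : (#(T₀ ∆ Tt) : ℝ) = r * #T₀)
    (hcone : nrm1 (restr h T₀ᶜ) ≤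
      w * nrm1 (restr h T₀) + (1 - w) * nrm1 (restr h (T₀ ∆ Tt)) + ξ) :
    nrm1 (restr h T₀ᶜ) ≤ (w + (1 - w) * √r) * √(#T₀ : ℝ) * nrm2 (restr h (T₀ ∪ Tt)) + ξ := by
  have hT₀ : nrm1 (restr h T₀) ≤ √(#T₀ : ℝ) * nrm2 (restr h (T₀ ∪ Tt)) :=
    (nrm1_restr_le_sqrt_card_mul_nrm2 h T₀).trans <| by
      gcongr; exact nrm2_restr_mono h subset_union_left
  have hE : nrm1 (restr h (T₀ ∆ Tt)) ≤ √r * √(#T₀ : ℝ) * nrm2 (restr h (T₀ ∪ Tt)) :=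
    (nrm1_restr_le_sqrt_card_mul_nrm2 h _).trans <| by
      rw [hr, Real.sqrt_mul' _ (Nat.cast_nonneg _)]
      gcongr; exact nrm2_restr_mono h symmDiff_subset_union
  have hw1' : 0 ≤ 1 - w := sub_nonneg.2 hw1
  calc nrm1 (restr h T₀ᶜ)
      ≤ w * (√(#T₀ : ℝ) * nrm2 (restr h (T₀ ∪ Tt))) +
          (1 - w) * (√r * √(#T₀ : ℝ) * nrm2 (restr h (T₀ ∪ Tt))) + ξ :=
        hcone.trans (by gcongr)
    _ = (w + (1 - w) * √r) * √(#T₀ : ℝ) * nrm2 (restr h (T₀ ∪ Tt)) + ξ := by ring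

end Cone

/-- The robust null space property delivered by the restricted isometry bounds: `X` is the `ℓ2`
norm of `h` on `T₀` together with the `k` largest entries of `h` outside `T₀`. -/
lemma exists_nrm2_restr_bounds_of_rip {m n s k : ℕ} (hk : 0 < k)
    {A : Matrix (Fin m) (Fin n) ℝ} {δ₁ δ₂ : ℝ}
    (hRIP₁ : RIPBound A δ₁ k) (hRIP₂ : RIPBound A δ₂ (k + s))
    (h : Fin n → ℝ) {T₀ : Finset (Fin n)} (hT₀ : #T₀ = s) :
    ∃ X, (∀ W ⊆ T₀ᶜ, #W ≤ k → nrm2 (restr h (T₀ ∪ W)) ≤ X) ∧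
      √(1 - δ₂) * X ≤ nrm2 (A *ᵥ h) + √(1 + δ₁) * (nrm1 (restr h T₀ᶜ) / √(k : ℝ)) ∧
      nrm2 h ≤ X + nrm1 (restr h T₀ᶜ) / √(k : ℝ) := by
  obtain ⟨T₁, hT₁, hT₁k, hT₁top⟩ :=
    exists_subset_card_eq_forall_le (fun i => |h i|) (min_le_right k #T₀ᶜ)
  have hT₀T₁ : Disjoint T₀ T₁ := disjoint_of_subset_right hT₁ disjoint_compl_right
  have htail : T₀ᶜ \ T₁ = (T₀ ∪ T₁)ᶜ := by rw [compl_union, sdiff_eq_inter_compl]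
  have hk' : 0 < √(k : ℝ) := Real.sqrt_pos.2 (by exact_mod_cast hk)
  have hsparse : ∀ S : Finset (Fin n), #S ≤ k →
      nrm2 (A *ᵥ restr h S) ≤ √(1 + δ₁) * nrm2 (restr h S) :=
    fun S hS => hRIP₁.nrm2_mulVec_le ((card_support_restr_le h S).trans hS)
  have htail₂ : nrm2 (restr h (T₀ ∪ T₁)ᶜ) ≤ nrm1 (restr h T₀ᶜ) / √(k : ℝ) := by
    have := sqrt_mul_le_nrm1_restr_of_forall_le hk zero_le_one nrm2_add_le
      (fun S _ => (one_mul _).ge) T₀ᶜ T₁ hT₁ hT₁k hT₁top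
    rw [le_div_iff₀ hk', ← htail]
    linarith
  have htailA : nrm2 (A *ᵥ restr h (T₀ ∪ T₁)ᶜ) ≤ √(1 + δ₁) * (nrm1 (restr h T₀ᶜ) / √(k : ℝ)) := by
    have := sqrt_mul_le_nrm1_restr_of_forall_le (N := fun v => nrm2 (A *ᵥ v)) hk
      (Real.sqrt_nonneg _) (fun u v => by simpa only [Matrix.mulVec_add] using nrm2_add_le _ _)
      hsparse T₀ᶜ T₁ hT₁ hT₁k hT₁top
    rw [mul_div_assoc', le_div_iff₀ hk', ← htail]
    linarith
  refine ⟨nrm2 (restr h (T₀ ∪ T₁)), fun W hW hWk => ?_, ?_, ?_⟩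
  · have hW' : #W ≤ #T₁ := hT₁k ▸ le_min hWk (card_le_card hW)
    rw [nrm2_restr, nrm2_restr, sum_union (disjoint_of_subset_right hW disjoint_compl_right),
      sum_union hT₀T₁]
    gcongr 2
    exact sum_le_sum_of_forall_le_of_card_le (fun i => sq_nonneg (h i))
      (fun i hi j hj => sq_le_sq.2 (hT₁top i hi j hj)) hW hW'
  · have hsupp : #{i | restr h (T₀ ∪ T₁) i ≠ 0} ≤ k + s :=
      (card_support_restr_le h _).trans ((card_union_le _ _).trans (by omega))
    have hsplit : A *ᵥ restr h (T₀ ∪ T₁) = A *ᵥ h - A *ᵥ restr h (T₀ ∪ T₁)ᶜ :=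
      eq_sub_of_add_eq (by rw [← Matrix.mulVec_add, restr_add_restr_compl])
    calc √(1 - δ₂) * nrm2 (restr h (T₀ ∪ T₁)) ≤ nrm2 (A *ᵥ restr h (T₀ ∪ T₁)) :=
          hRIP₂.sqrt_mul_nrm2_le hsupp
      _ ≤ nrm2 (A *ᵥ h) + nrm2 (A *ᵥ restr h (T₀ ∪ T₁)ᶜ) := hsplit ▸ nrm2_sub_le _ _
      _ ≤ _ := by gcongr
  · calc nrm2 h ≤ nrm2 (restr h (T₀ ∪ T₁)) + nrm2 (restr h (T₀ ∪ T₁)ᶜ) := by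
          conv_lhs => rw [← restr_add_restr_compl h (T₀ ∪ T₁)]
          exact nrm2_add_le _ _
      _ ≤ _ := by gcongr

lemma sqrt_sub_div_sqrt_mul_sqrt_pos {a b δ₁ δ₂ : ℝ} (ha : 0 < a) (hb : 0 ≤ b)
    (hδ₁ : 0 ≤ 1 + δ₁) (hcond : δ₁ + a / b ^ 2 * δ₂ < a / b ^ 2 - 1) :
    0 < √(1 - δ₂) - b / √a * √(1 + δ₁) := by
  have hb : 0 < b := hb.lt_of_ne fun hb => by subst hb; simp at hcond; linarith
  have key : b ^ 2 * (1 + δ₁) / a < 1 - δ₂ := by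
    have : 1 + δ₁ < a / b ^ 2 * (1 - δ₂) := by linarith
    rw [div_mul_eq_mul_div, lt_div_iff₀ (by positivity)] at this
    rw [div_lt_iff₀ ha]
    linarith
  have hsqrt : b / √a * √(1 + δ₁) = √(b ^ 2 * (1 + δ₁) / a) := by
    rw [Real.sqrt_div' _ ha.le, Real.sqrt_mul' _ hδ₁, Real.sqrt_sq hb.le]
    ring
  rw [hsqrt, sub_pos]
  exact Real.sqrt_lt_sqrt (by positivity) key

lemma le_of_tail_bounds {H X L ε ξ p q b t σ : ℝ} (ht : 0 < t) (hσ : 0 < σ) (hp : 0 ≤ p)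
    (hb : 0 ≤ b) (hD : 0 < q - b / t * p) (hH : H ≤ X + L / (t * σ))
    (hX : q * X ≤ 2 * ε + p * (L / (t * σ))) (hL : L ≤ b * σ * X + 2 * ξ) :
    H ≤ 2 * (1 + b / t) / (q - b / t * p) * ε +
      2 / t * (q + p) / (q - b / t * p) * σ⁻¹ * ξ := by
  have hτ : L / (t * σ) ≤ b / t * X + 2 * (ξ / (t * σ)) :=
    calc L / (t * σ) ≤ (b * σ * X + 2 * ξ) / (t * σ) := by gcongr
      _ = b / t * X + 2 * (ξ / (t * σ)) := by field_simp
  have hDX : (q - b / t * p) * X ≤ 2 * ε + 2 * p * (ξ / (t * σ)) := by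
    linarith [mul_le_mul_of_nonneg_left hτ hp]
  have hβ : 0 ≤ 1 + b / t := by positivity
  calc H ≤ (2 * (1 + b / t) * ε + 2 * (q + p) * (ξ / (t * σ))) / (q - b / t * p) := by
        rw [le_div_iff₀ hD]
        linarith [mul_le_mul_of_nonneg_left hH hD.le, mul_le_mul_of_nonneg_left hτ hD.le,
          mul_le_mul_of_nonneg_left hDX hβ]
    _ = _ := by ring

lemma nrm2_mulVec_sub_le_two_mul {m n : ℕ} {A : Matrix (Fin m) (Fin n) ℝ} {x xh : Fin n → ℝ}
    {y z : Fin m → ℝ} {ε : ℝ} (hz : nrm2 z ≤ ε) (hy : y = A *ᵥ x + z)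
    (hfeas : nrm2 (A *ᵥ xh - y) ≤ ε) : nrm2 (A *ᵥ (xh - x)) ≤ 2 * ε := by
  have : A *ᵥ (xh - x) = (A *ᵥ xh - y) + z := by rw [hy, Matrix.mulVec_sub]; abel
  linarith [this ▸ nrm2_add_le (A *ᵥ xh - y) z]

theorem weighted_l1_recovery_single_weight_general
    {m n s : ℕ} (hs : 0 < s)
    (x : Fin n → ℝ) (T₀ : Finset (Fin n)) (hT₀card : T₀.card = s)
    (Tt : Finset (Fin n)) (ρ α : ℝ)
    (hρ : (Tt.card : ℝ) = ρ * s) (hα : ((Tt ∩ T₀).card : ℝ) = α * (ρ * s))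
    (w : ℝ) (hw0 : 0 ≤ w) (hw1 : w ≤ 1)
    (b : ℝ) (hb : b = w + (1 - w) * Real.sqrt (1 + ρ - 2 * α * ρ))
    (a : ℝ) (ha : 1 < a) (as : ℕ) (has : 0 < as) (hasval : (as : ℝ) = a * s)
    (hra : (1 - α) * ρ ≤ a)
    (A : Matrix (Fin m) (Fin n) ℝ) (δas δa1s : ℝ)
    (hδas0 : 0 ≤ δas)
    (hRIP1 : RIPBound A δas as) (hRIP2 : RIPBound A δa1s (as + s))
    (hcond : δas + (a / b ^ 2) * δa1s < a / b ^ 2 - 1)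
    (z : Fin m → ℝ) (ε : ℝ) (hz : nrm2 z ≤ ε)
    (y : Fin m → ℝ) (hy : y = A.mulVec x + z)
    (xh : Fin n → ℝ) (hfeas : nrm2 (A.mulVec xh - y) ≤ ε)
    (hmin : w * nrm1 (restr xh Tt) + nrm1 (restr xh Ttᶜ) ≤
      w * nrm1 (restr x Tt) + nrm1 (restr x Ttᶜ)) :
    nrm2 (xh - x) ≤
      2 * (1 + b / Real.sqrt a) /
          (Real.sqrt (1 - δa1s) - b / Real.sqrt a * Real.sqrt (1 + δas)) * ε +
      2 / Real.sqrt a * (Real.sqrt (1 - δa1s) + Real.sqrt (1 + δas)) /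
          (Real.sqrt (1 - δa1s) - b / Real.sqrt a * Real.sqrt (1 + δas)) *
        (Real.sqrt (s : ℝ))⁻¹ *
        (w * nrm1 (restr x T₀ᶜ) + (1 - w) * nrm1 (restr x (Ttᶜ ∩ T₀ᶜ))) := by
  set h := xh - x
  obtain ⟨X, hXW, hXA, hXh⟩ := exists_nrm2_restr_bounds_of_rip has hRIP1 hRIP2 h hT₀card
  rw [hasval, Real.sqrt_mul (by linarith)] at hXA hXh
  have hW : #(Tt \ T₀) ≤ as := by
    rw [← Nat.cast_le (α := ℝ), card_sdiff_cast, hρ, hα, hasval]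
    linarith [mul_le_mul_of_nonneg_right hra (Nat.cast_nonneg (α := ℝ) s)]
  have hX : nrm2 (restr h (T₀ ∪ Tt)) ≤ X := by
    rw [← union_sdiff_self_eq_union]
    exact hXW _ (fun i hi => mem_compl.2 (mem_sdiff.1 hi).2) hW
  have hb0 : 0 ≤ b := hb ▸ by have := sub_nonneg.2 hw1; positivity
  have hcone : nrm1 (restr h T₀ᶜ) ≤ b * √(s : ℝ) * X +
      2 * (w * nrm1 (restr x T₀ᶜ) + (1 - w) * nrm1 (restr x (Ttᶜ ∩ T₀ᶜ))) := by
    have hE : (#(T₀ ∆ Tt) : ℝ) = (1 + ρ - 2 * α * ρ) * #T₀ := by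
      rw [card_symmDiff_cast, inter_comm, hα, hρ, hT₀card]; ring
    have := nrm1_restr_compl_le_of_cone hw0 hw1 hE (nrm1_restr_compl_le_of_weighted_le hw0 hmin)
    rw [← hb, hT₀card] at this
    exact this.trans (by gcongr)
  exact le_of_tail_bounds (Real.sqrt_pos.2 (by linarith)) (Real.sqrt_pos.2 (by exact_mod_cast hs))
    (Real.sqrt_nonneg _) hb0 (sqrt_sub_div_sqrt_mul_sqrt_pos (by linarith) hb0 (by linarith) hcond)
    hXh (hXA.trans (by linarith [nrm2_mulVec_sub_le_two_mul hz hy hfeas])) hcone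

/-- single-weight weighted ℓ1-minimization recovery guarantee
(Friedlander et al.). -/
theorem weighted_l1_recovery_single_weight
    {m n s : ℕ} (hs : 0 < s)
    (x : Fin n → ℝ) (T₀ : Finset (Fin n)) (hT₀card : T₀.card = s)
    (hT₀top : ∀ i ∉ T₀, ∀ j ∈ T₀, |x i| ≤ |x j|)
    (Tt : Finset (Fin n)) (ρ α : ℝ)
    (hρ : (Tt.card : ℝ) = ρ * s) (hα : ((Tt ∩ T₀).card : ℝ) = α * (ρ * s))
    (w : ℝ) (hw0 : 0 ≤ w) (hw1 : w ≤ 1)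
    (b : ℝ) (hb : b = w + (1 - w) * Real.sqrt (1 + ρ - 2 * α * ρ))
    (a : ℝ) (ha : 1 < a) (as : ℕ) (has : 0 < as) (hasval : (as : ℝ) = a * s)
    (hra : (1 - α) * ρ ≤ a)
    (A : Matrix (Fin m) (Fin n) ℝ) (δas δa1s : ℝ)
    (hδas0 : 0 ≤ δas) (hδas1 : δas < 1) (hδa1s0 : 0 ≤ δa1s) (hδa1s1 : δa1s < 1)
    (hRIP1 : RIPBound A δas as) (hRIP2 : RIPBound A δa1s (as + s))
    (hcond : δas + (a / b ^ 2) * δa1s < a / b ^ 2 - 1)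
    (z : Fin m → ℝ) (ε : ℝ) (hz : nrm2 z ≤ ε)
    (y : Fin m → ℝ) (hy : y = A.mulVec x + z)
    (xh : Fin n → ℝ) (hfeas : nrm2 (A.mulVec xh - y) ≤ ε)
    (hmin : w * nrm1 (restr xh Tt) + nrm1 (restr xh Ttᶜ) ≤
      w * nrm1 (restr x Tt) + nrm1 (restr x Ttᶜ)) :
    nrm2 (xh - x) ≤
      2 * (1 + b / Real.sqrt a) /
          (Real.sqrt (1 - δa1s) - b / Real.sqrt a * Real.sqrt (1 + δas)) * ε +
      2 / Real.sqrt a * (Real.sqrt (1 - δa1s) + Real.sqrt (1 + δas)) /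
          (Real.sqrt (1 - δa1s) - b / Real.sqrt a * Real.sqrt (1 + δas)) *
        (Real.sqrt (s : ℝ))⁻¹ *
        (w * nrm1 (restr x T₀ᶜ) + (1 - w) * nrm1 (restr x (Ttᶜ ∩ T₀ᶜ))) :=
  weighted_l1_recovery_single_weight_general hs x T₀ hT₀card Tt ρ α hρ hα w hw0 hw1 b hb a ha as has
    hasval hra A δas δa1s hδas0 hRIP1 hRIP2 hcond z ε hz y hy xh hfeas hmin
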